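/- arXiv:math/0506097 — 2 statements merged into one kernel-verified Lean document; each statement's English description precedes it below -/
import Mathlib

section
/- The map (s:t:u) ↦ ((s²+u²)(3u−8t) : i(s²−u²)(3u−8t) : −6is(u²−6tu+8t²) : 20st(u−3t)) sends every point of ℙ²(ℂ) outside the common zero locus of the four coordinate polynomials to a point of the complex surface in ℙ³ defined by (x²+y²+z²+(16/25)w²)² − 4x²w² − 4y²w² = 0. -/
/-- The map `(s:t:u) ↦ (F₀:F₁:F₂:F₃)` with
`F₀ = (s²+u²)(3u−8t)`, `F₁ = i(s²−u²)(3u−8t)`, `F₂ = −6is(u²−6tu+8t²)`,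
`F₃ = 20st(u−3t)` sends every point of `ℙ²(ℂ)` outside the common zero locus of
the four coordinate polynomials to a point of the torus surface
`(x²+y²+z²+(16/25)w²)² − 4x²w² − 4y²w² = 0` in `ℙ³(ℂ)`. -/
theorem torus_parametrization_maps_into_surface :
    ∀ s t u : ℂ,
      let F₀ : ℂ := (s ^ 2 + u ^ 2) * (3 * u - 8 * t)
      let F₁ : ℂ := Complex.I * (s ^ 2 - u ^ 2) * (3 * u - 8 * t)
      let F₂ : ℂ := -6 * Complex.I * s * (u ^ 2 - 6 * t * u + 8 * t ^ 2)
      let F₃ : ℂ := 20 * s * t * (u - 3 * t)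
      ¬(F₀ = 0 ∧ F₁ = 0 ∧ F₂ = 0 ∧ F₃ = 0) →
      (F₀ ^ 2 + F₁ ^ 2 + F₂ ^ 2 + (16 / 25) * F₃ ^ 2) ^ 2
        - 4 * F₀ ^ 2 * F₃ ^ 2 - 4 * F₁ ^ 2 * F₃ ^ 2 = 0 := by
  intro s t u F₀ F₁ F₂ F₃ _
  simp only [F₀, F₁, F₂, F₃]
  have e1 : (Complex.I * (s ^ 2 - u ^ 2) * (3 * u - 8 * t)) ^ 2
      = -((s ^ 2 - u ^ 2) * (3 * u - 8 * t)) ^ 2 := by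
    rw [mul_pow, mul_pow, Complex.I_sq]; ring
  have e2 : (-6 * Complex.I * s * (u ^ 2 - 6 * t * u + 8 * t ^ 2)) ^ 2
      = -(6 * s * (u ^ 2 - 6 * t * u + 8 * t ^ 2)) ^ 2 := by
    rw [mul_pow, mul_pow, mul_pow, Complex.I_sq]; ring
  rw [e1, e2]; ring
end

section
/- The four homogeneous cubic forms F₀=(s²+u²)(3u−8t), F₁=i(s²−u²)(3u−8t), F₂=−6is(u²−6tu+8t²), F₃=20st(u−3t) in ℂ[s,t,u] have no common non-constant divisor. -/
/-!
Combining `F₀ + i F₁ = 2 u² (3u - 8t)` and `10 i F₂ + 18 F₃ = 60 s (u² - 10 t²)`, a common divisor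
divides both `u² (3u - 8t)` and `P = s (u² - 10 t²)`. The linear forms `u` and `3u - 8t` are
irreducible and neither divides `P`, since `P` does not vanish at `(1, 1, 0)` resp. `(1, 3, 8)`.
-/

open MvPolynomial

theorem isUnit_natCast_of_algebra (K : Type*) {A : Type*} [Field K] [CharZero K] [Semiring A]
    [Algebra K A] {n : ℕ} (hn : n ≠ 0) : IsUnit (n : A) :=
  map_natCast (algebraMap K A) n ▸ (Nat.cast_ne_zero.2 hn).isUnit.map _

namespace MvPolynomial

variable {σ R : Type*} [CommRing R]

theorem irreducible_C_mul_X_add [IsDomain R] {a : R} (ha : IsUnit a) (i : σ)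
    {g : MvPolynomial σ R} (hg : i ∉ g.vars) : Irreducible (C a * X i + g) :=
  irreducible_mul_X_add _ _ i (C_ne_zero.2 ha.ne_zero) (by simp) hg (ha.map C).isRelPrime_left

theorem isRelPrime_of_eval_eq_zero {p q : MvPolynomial σ R} (hp : Irreducible p) (x : σ → R)
    (hpx : eval x p = 0) (hqx : eval x q ≠ 0) : IsRelPrime p q :=
  hp.isRelPrime_iff_not_dvd.2 fun ⟨r, hr⟩ ↦ hqx (by simp [hr, hpx])

end MvPolynomial

/-- The four homogeneous cubic forms
`F₀=(s²+u²)(3u−8t)`, `F₁=i(s²−u²)(3u−8t)`, `F₂=−6is(u²−6tu+8t²)`,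
`F₃=20st(u−3t)` in `ℂ[s,t,u]` have no common non-constant divisor:
every common divisor is a unit (a nonzero constant). -/
theorem torus_parametrization_coprime :
    let s : MvPolynomial (Fin 3) ℂ := X 0
    let t : MvPolynomial (Fin 3) ℂ := X 1
    let u : MvPolynomial (Fin 3) ℂ := X 2
    let F₀ := (s ^ 2 + u ^ 2) * (3 * u - 8 * t)
    let F₁ := C Complex.I * (s ^ 2 - u ^ 2) * (3 * u - 8 * t)
    let F₂ := C (-6 * Complex.I) * s * (u ^ 2 - 6 * t * u + 8 * t ^ 2)
    let F₃ := 20 * s * t * (u - 3 * t)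
    ∀ g : MvPolynomial (Fin 3) ℂ,
      g ∣ F₀ → g ∣ F₁ → g ∣ F₂ → g ∣ F₃ → IsUnit g := by
  intro s t u F₀ F₁ F₂ F₃ g h₀ h₁ h₂ h₃
  have hI : (C Complex.I : MvPolynomial (Fin 3) ℂ) ^ 2 = -1 := by
    rw [← C_pow, Complex.I_sq, C_neg, C_1]
  set ℓ := 3 * u - 8 * t
  set P := s * (u ^ 2 - 10 * t ^ 2)
  have hA : g ∣ u ^ 2 * ℓ := by
    refine ((isUnit_natCast_of_algebra ℂ two_ne_zero).dvd_mul_left).1 ?_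
    have hcomb : ((2 : ℕ) : MvPolynomial (Fin 3) ℂ) * (u ^ 2 * ℓ) = F₀ + C Complex.I * F₁ := by
      push_cast
      linear_combination (-(s ^ 2 - u ^ 2) * ℓ) * hI
    rw [hcomb]
    exact dvd_add h₀ (h₁.mul_left _)
  have hP : g ∣ P := by
    refine ((isUnit_natCast_of_algebra ℂ (by norm_num : 60 ≠ 0)).dvd_mul_left).1 ?_
    have hcomb : ((60 : ℕ) : MvPolynomial (Fin 3) ℂ) * P = 10 * C Complex.I * F₂ + 18 * F₃ := by
      simp only [F₂, F₃, C_mul, map_neg, map_ofNat, Nat.cast_ofNat]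
      linear_combination (60 * s * (u ^ 2 - 6 * t * u + 8 * t ^ 2)) * hI
    rw [hcomb]
    exact dvd_add (h₂.mul_left _) (h₃.mul_left _)
  have hu : IsRelPrime u P :=
    isRelPrime_of_eval_eq_zero X_prime.irreducible ![1, 1, 0] (by simp [u]) (by simp [P, s, t, u])
  have hℓ : IsRelPrime ℓ P := by
    have hℓ_eq : ℓ = C 3 * X 2 + C (-8) * X 1 := by
      simp only [ℓ, u, t, C_neg, map_ofNat]
      ring
    have hℓ_irr : Irreducible ℓ :=
      hℓ_eq ▸ irreducible_C_mul_X_add (by norm_num) 2 (by simp [vars_C_mul])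
    exact isRelPrime_of_eval_eq_zero hℓ_irr ![1, 3, 8] (by simp [ℓ, t, u]; norm_num)
      (by simp [P, s, t, u]; norm_num)
  exact (hu.pow_left.mul_left hℓ) hA hP
end
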